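/- A sequence ε ∈ Σ belongs to Γ if and only if ε_1 = 1 and μ(ε) belongs to Γ. -/
import Mathlib


/-- A 0-1 sequence: all values are at most 1. Index `k` corresponds to `ε_{k+1}` in the paper. -/
def isSeq (ε : ℕ → ℕ) : Prop := ∀ k, ε k ≤ 1

/-- The shift map σ. -/
def shift (ε : ℕ → ℕ) : ℕ → ℕ := fun n => ε (n + 1)

/-- The mirror image ε̄, (ε̄)_n = 1 - ε_n. -/
def mirror (ε : ℕ → ℕ) : ℕ → ℕ := fun n => 1 - ε n

/-- Strict lexicographic order on sequences. -/
def lexLt (a b : ℕ → ℕ) : Prop := ∃ k, (∀ j, j < k → a j = b j) ∧ a k < b k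

/-- Non-strict lexicographic order. -/
def lexLe (a b : ℕ → ℕ) : Prop := lexLt a b ∨ a = b

/-- ε is periodic with smallest period n ≥ 1. -/
def periodicSmallest (n : ℕ) (ε : ℕ → ℕ) : Prop :=
  1 ≤ n ∧ shift^[n] ε = ε ∧ ∀ j, 1 ≤ j → j < n → shift^[j] ε ≠ ε

/-- The set Γ = {ε ∈ Σ : ε̄ ⪯ σ^k(ε) ⪯ ε for all k ≥ 0}. -/
def Gamma (ε : ℕ → ℕ) : Prop :=
  isSeq ε ∧ ∀ k, lexLe (mirror ε) (shift^[k] ε) ∧ lexLe (shift^[k] ε) ε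

/-- The doubling map μ: (μ(ε))_1 = 1, (μ(ε))_{2n} = ε_n, (μ(ε))_{2n+1} = 1 - ε_n
(written with 0-based indexing). -/
def mu (ε : ℕ → ℕ) : ℕ → ℕ :=
  fun i => if i = 0 then 1 else if i % 2 = 1 then ε ((i - 1) / 2) else 1 - ε (i / 2 - 1)

lemma shift_iter : ∀ (k : ℕ) (a : ℕ → ℕ) (n : ℕ), shift^[k] a n = a (n + k) := by
  intro k
  induction k with
  | zero => intro a n; rfl
  | succ k ih =>
    intro a n
    rw [Function.iterate_succ_apply, ih]
    rfl

lemma isSeq_shift {a : ℕ → ℕ} (h : isSeq a) (k : ℕ) : isSeq (shift^[k] a) := by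
  intro n; rw [shift_iter]; exact h _

lemma isSeq_mirror (a : ℕ → ℕ) : isSeq (mirror a) := by
  intro n; simp [mirror]

lemma mirror_mirror {a : ℕ → ℕ} (h : isSeq a) : mirror (mirror a) = a := by
  funext n; have := h n; simp [mirror]; omega

lemma shift_mirror (a : ℕ → ℕ) (k : ℕ) : shift^[k] (mirror a) = mirror (shift^[k] a) := by
  funext n; simp [shift_iter, mirror]

lemma lexLt_irrefl (a : ℕ → ℕ) : ¬ lexLt a a := by
  rintro ⟨k, _, h⟩; exact lt_irrefl _ h

lemma lexLt_asymm {a b : ℕ → ℕ} (h1 : lexLt a b) (h2 : lexLt b a) : False := by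
  obtain ⟨k1, p1, q1⟩ := h1
  obtain ⟨k2, p2, q2⟩ := h2
  rcases lt_trichotomy k1 k2 with h | h | h
  · have := p2 k1 h; omega
  · subst h; omega
  · have := p1 k2 h; omega

lemma lexLe_lexLt_absurd {a b : ℕ → ℕ} (h1 : lexLe a b) (h2 : lexLt b a) : False := by
  rcases h1 with h1 | rfl
  · exact lexLt_asymm h1 h2
  · exact lexLt_irrefl _ h2

lemma lex_total (a b : ℕ → ℕ) : lexLe a b ∨ lexLt b a := by
  by_cases h : a = b
  · exact Or.inl (Or.inr h)
  · have hex : ∃ k, a k ≠ b k := by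
      by_contra hc
      push_neg at hc
      exact h (funext hc)
    have hspec := Nat.find_spec hex
    have hmin : ∀ j, j < Nat.find hex → a j = b j := by
      intro j hj
      have := Nat.find_min hex hj
      omega
    rcases Nat.lt_or_ge (a (Nat.find hex)) (b (Nat.find hex)) with hlt | hge
    · exact Or.inl (Or.inl ⟨Nat.find hex, hmin, hlt⟩)
    · refine Or.inr ⟨Nat.find hex, fun j hj => (hmin j hj).symm, by omega⟩

lemma lexLt_mirror {a b : ℕ → ℕ} (hb : isSeq b) (h : lexLt a b) :
    lexLt (mirror b) (mirror a) := by
  obtain ⟨k, p, q⟩ := h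
  refine ⟨k, fun j hj => by simp [mirror, p j hj], ?_⟩
  have := hb k
  simp [mirror]; omega

lemma lexLe_mirror {a b : ℕ → ℕ} (hb : isSeq b) (h : lexLe a b) :
    lexLe (mirror b) (mirror a) := by
  rcases h with h | rfl
  · exact Or.inl (lexLt_mirror hb h)
  · exact Or.inr rfl

lemma mu_apply_zero (ε : ℕ → ℕ) {i : ℕ} (h : i = 0) : mu ε i = 1 := by
  subst h; rfl

lemma mu_apply_odd (ε : ℕ → ℕ) {i n : ℕ} (h : i = 2 * n + 1) : mu ε i = ε n := by
  subst h
  have h0 : ¬ (2 * n + 1 = 0) := by omega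
  have h1 : (2 * n + 1) % 2 = 1 := by omega
  have h2 : (2 * n + 1 - 1) / 2 = n := by omega
  simp [mu, h0, h1, h2]

lemma mu_apply_even (ε : ℕ → ℕ) {i n : ℕ} (h : i = 2 * n + 2) : mu ε i = 1 - ε n := by
  subst h
  have h0 : ¬ (2 * n + 2 = 0) := by omega
  have h1 : ¬ ((2 * n + 2) % 2 = 1) := by omega
  have h2 : (2 * n + 2) / 2 - 1 = n := by omega
  simp [mu, h0, h1, h2]

lemma three_cases (n : ℕ) : n = 0 ∨ (∃ i, n = 2 * i + 1) ∨ (∃ i, n = 2 * i + 2) := by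
  rcases Nat.even_or_odd n with ⟨i, hi⟩ | ⟨i, hi⟩
  · rcases Nat.eq_zero_or_pos n with h | h
    · exact Or.inl h
    · exact Or.inr (Or.inr ⟨i - 1, by omega⟩)
  · exact Or.inr (Or.inl ⟨i, by omega⟩)

lemma isSeq_mu {ε : ℕ → ℕ} (hseq : isSeq ε) : isSeq (mu ε) := by
  intro i
  rcases three_cases i with h | ⟨n, h⟩ | ⟨n, h⟩
  · rw [mu_apply_zero ε h]
  · rw [mu_apply_odd ε h]; exact hseq n
  · rw [mu_apply_even ε h]; omega

lemma eps0_eq_one {ε : ℕ → ℕ} (hseq : isSeq ε) (hG : Gamma ε) : ε 0 = 1 := by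
  have h0 := (hG.2 0).1
  rcases h0 with ⟨k, p, q⟩ | heq
  · rcases Nat.eq_zero_or_pos k with rfl | hk
    · rw [shift_iter] at q
      have := hseq 0
      simp [mirror] at q
      omega
    · have := p 0 hk
      rw [shift_iter] at this
      have h1 := hseq 0
      simp [mirror] at this
      omega
  · have := congrFun heq 0
    rw [shift_iter] at this
    have h1 := hseq 0
    simp [mirror] at this
    omega

lemma forward_gamma {ε : ℕ → ℕ} (hseq : isSeq ε) (hε0 : ε 0 = 1) (hG : Gamma ε) :
    Gamma (mu ε) := by
  refine ⟨isSeq_mu hseq, fun j => ?_⟩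
  have hcase : ∀ k : ℕ, ε k = 0 ∨ ε k = 1 := fun k => by have := hseq k; omega
  rcases three_cases j with rfl | ⟨k, rfl⟩ | ⟨k, rfl⟩
  · constructor
    · refine Or.inl ⟨0, fun j hj => by omega, ?_⟩
      rw [shift_iter]
      rw [mu_apply_zero ε (show 0 + 0 = 0 by omega)]
      simp [mirror, mu_apply_zero ε rfl]
    · exact Or.inr (by simp)
  · -- odd shift 2k+1
    constructor
    · -- mirror (mu ε) ⪯ shift^[2k+1] (mu ε)
      rcases hcase k with hk | hk
      · refine Or.inl ⟨1, ?_, ?_⟩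
        · intro n hn
          interval_cases n
          rw [shift_iter, mu_apply_odd ε (show 0 + (2 * k + 1) = 2 * k + 1 from by omega)]
          simp [mirror, mu_apply_zero ε rfl, hk]
        · rw [shift_iter, mu_apply_even ε (show 1 + (2 * k + 1) = 2 * k + 2 from by omega)]
          simp [mirror, mu_apply_odd ε (show (1:ℕ) = 2 * 0 + 1 from by omega), hε0, hk]
      · refine Or.inl ⟨0, fun n hn => by omega, ?_⟩
        rw [shift_iter, mu_apply_odd ε (show 0 + (2 * k + 1) = 2 * k + 1 from by omega)]
        simp [mirror, mu_apply_zero ε rfl, hk]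
    · -- shift^[2k+1] (mu ε) ⪯ mu ε
      rcases hcase k with hk | hk
      · refine Or.inl ⟨0, fun n hn => by omega, ?_⟩
        rw [shift_iter, mu_apply_odd ε (show 0 + (2 * k + 1) = 2 * k + 1 from by omega)]
        simp [mu_apply_zero ε rfl, hk]
      · refine Or.inl ⟨1, ?_, ?_⟩
        · intro n hn
          interval_cases n
          rw [shift_iter, mu_apply_odd ε (show 0 + (2 * k + 1) = 2 * k + 1 from by omega)]
          simp [mu_apply_zero ε rfl, hk]
        · rw [shift_iter, mu_apply_even ε (show 1 + (2 * k + 1) = 2 * k + 2 from by omega)]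
          simp [mu_apply_odd ε (show (1:ℕ) = 2 * 0 + 1 from by omega), hε0, hk]
  · -- even shift 2k+2
    constructor
    · -- mirror (mu ε) ⪯ shift^[2k+2] (mu ε)
      rcases hcase k with hk | hk
      · refine Or.inl ⟨0, fun n hn => by omega, ?_⟩
        rw [shift_iter, mu_apply_even ε (show 0 + (2 * k + 2) = 2 * k + 2 from by omega)]
        simp [mirror, mu_apply_zero ε rfl, hk]
      · have hle := (hG.2 (k + 1)).1
        rcases hle with ⟨t, pp, qq⟩ | heq
        · simp only [shift_iter] at pp qq
          refine Or.inl ⟨2 * t + 1, ?_, ?_⟩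
          · intro n hn
            rw [shift_iter]
            rcases three_cases n with rfl | ⟨i, rfl⟩ | ⟨i, rfl⟩
            · rw [mu_apply_even ε (show 0 + (2 * k + 2) = 2 * k + 2 from by omega)]
              simp [mirror, mu_apply_zero ε rfl, hk]
            · have hi : i < t := by omega
              have := pp i hi
              simp [mirror] at this ⊢
              rw [mu_apply_odd ε (show 2 * i + 1 + (2 * k + 2) = 2 * (i + (k + 1)) + 1 from by omega)]
              rw [mu_apply_odd ε (rfl : 2 * i + 1 = 2 * i + 1)]
              omega
            · have hi : i < t := by omega
              have := pp i hi
              simp [mirror] at this ⊢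
              rw [mu_apply_even ε (show 2 * i + 2 + (2 * k + 2) = 2 * (i + (k + 1)) + 2 from by omega)]
              rw [mu_apply_even ε (rfl : 2 * i + 2 = 2 * i + 2)]
              have := hseq i
              omega
          · rw [shift_iter]
            rw [mu_apply_odd ε (show 2 * t + 1 + (2 * k + 2) = 2 * (t + (k + 1)) + 1 from by omega)]
            simp [mirror] at qq ⊢
            rw [mu_apply_odd ε (rfl : 2 * t + 1 = 2 * t + 1)]
            omega
        · refine Or.inr ?_
          funext n
          rw [shift_iter]
          rcases three_cases n with rfl | ⟨i, rfl⟩ | ⟨i, rfl⟩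
          · rw [mu_apply_even ε (show 0 + (2 * k + 2) = 2 * k + 2 from by omega)]
            simp [mirror, mu_apply_zero ε rfl, hk]
          · have := congrFun heq i
            rw [shift_iter] at this
            simp [mirror] at this ⊢
            rw [mu_apply_odd ε (show 2 * i + 1 + (2 * k + 2) = 2 * (i + (k + 1)) + 1 from by omega)]
            rw [mu_apply_odd ε (rfl : 2 * i + 1 = 2 * i + 1)]
            omega
          · have := congrFun heq i
            rw [shift_iter] at this
            simp [mirror] at this ⊢
            rw [mu_apply_even ε (show 2 * i + 2 + (2 * k + 2) = 2 * (i + (k + 1)) + 2 from by omega)]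
            rw [mu_apply_even ε (rfl : 2 * i + 2 = 2 * i + 2)]
            have := hseq i
            omega
    · -- shift^[2k+2] (mu ε) ⪯ mu ε
      rcases hcase k with hk | hk
      · have hle := (hG.2 (k + 1)).2
        rcases hle with ⟨t, pp, qq⟩ | heq
        · simp only [shift_iter] at pp qq
          refine Or.inl ⟨2 * t + 1, ?_, ?_⟩
          · intro n hn
            rw [shift_iter]
            rcases three_cases n with rfl | ⟨i, rfl⟩ | ⟨i, rfl⟩
            · rw [mu_apply_even ε (show 0 + (2 * k + 2) = 2 * k + 2 from by omega)]
              simp [mu_apply_zero ε rfl, hk]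
            · have hi : i < t := by omega
              have := pp i hi
              rw [mu_apply_odd ε (show 2 * i + 1 + (2 * k + 2) = 2 * (i + (k + 1)) + 1 from by omega)]
              rw [mu_apply_odd ε (rfl : 2 * i + 1 = 2 * i + 1)]
              omega
            · have hi : i < t := by omega
              have := pp i hi
              rw [mu_apply_even ε (show 2 * i + 2 + (2 * k + 2) = 2 * (i + (k + 1)) + 2 from by omega)]
              rw [mu_apply_even ε (rfl : 2 * i + 2 = 2 * i + 2)]
              omega
          · rw [shift_iter]
            rw [mu_apply_odd ε (show 2 * t + 1 + (2 * k + 2) = 2 * (t + (k + 1)) + 1 from by omega)]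
            rw [mu_apply_odd ε (rfl : 2 * t + 1 = 2 * t + 1)]
            omega
        · refine Or.inr ?_
          funext n
          rw [shift_iter]
          rcases three_cases n with rfl | ⟨i, rfl⟩ | ⟨i, rfl⟩
          · rw [mu_apply_even ε (show 0 + (2 * k + 2) = 2 * k + 2 from by omega)]
            simp [mu_apply_zero ε rfl, hk]
          · have := congrFun heq i
            rw [shift_iter] at this
            rw [mu_apply_odd ε (show 2 * i + 1 + (2 * k + 2) = 2 * (i + (k + 1)) + 1 from by omega)]
            rw [mu_apply_odd ε (rfl : 2 * i + 1 = 2 * i + 1)]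
            omega
          · have := congrFun heq i
            rw [shift_iter] at this
            rw [mu_apply_even ε (show 2 * i + 2 + (2 * k + 2) = 2 * (i + (k + 1)) + 2 from by omega)]
            rw [mu_apply_even ε (rfl : 2 * i + 2 = 2 * i + 2)]
            omega
      · refine Or.inl ⟨0, fun n hn => by omega, ?_⟩
        rw [shift_iter, mu_apply_even ε (show 0 + (2 * k + 2) = 2 * k + 2 from by omega)]
        simp [mu_apply_zero ε rfl, hk]

lemma extractA {ε : ℕ → ℕ} (hG : Gamma (mu ε)) (k : ℕ) (hk : ε k = 0) :
    lexLe (shift^[k + 1] ε) ε := by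
  have hup := (hG.2 (2 * k + 2)).2
  rcases hup with ⟨t, pp, qq⟩ | heq
  · simp only [shift_iter] at pp qq
    rcases three_cases t with rfl | ⟨i, rfl⟩ | ⟨i, rfl⟩
    · exfalso
      rw [mu_apply_even ε (show 0 + (2 * k + 2) = 2 * k + 2 from by omega)] at qq
      rw [mu_apply_zero ε rfl] at qq
      omega
    · refine Or.inl ⟨i, ?_, ?_⟩
      · intro j hj
        have := pp (2 * j + 1) (by omega)
        rw [mu_apply_odd ε (show 2 * j + 1 + (2 * k + 2) = 2 * (j + (k + 1)) + 1 from by omega)] at this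
        rw [mu_apply_odd ε (rfl : 2 * j + 1 = 2 * j + 1)] at this
        rw [shift_iter]
        exact this
      · rw [mu_apply_odd ε (show 2 * i + 1 + (2 * k + 2) = 2 * (i + (k + 1)) + 1 from by omega)] at qq
        rw [mu_apply_odd ε (rfl : 2 * i + 1 = 2 * i + 1)] at qq
        rw [shift_iter]
        exact qq
    · exfalso
      have := pp (2 * i + 1) (by omega)
      rw [mu_apply_odd ε (show 2 * i + 1 + (2 * k + 2) = 2 * (i + (k + 1)) + 1 from by omega)] at this
      rw [mu_apply_odd ε (rfl : 2 * i + 1 = 2 * i + 1)] at this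
      rw [mu_apply_even ε (show 2 * i + 2 + (2 * k + 2) = 2 * (i + (k + 1)) + 2 from by omega)] at qq
      rw [mu_apply_even ε (rfl : 2 * i + 2 = 2 * i + 2)] at qq
      omega
  · refine Or.inr ?_
    funext n
    have := congrFun heq (2 * n + 1)
    rw [shift_iter] at this
    rw [mu_apply_odd ε (show 2 * n + 1 + (2 * k + 2) = 2 * (n + (k + 1)) + 1 from by omega)] at this
    rw [mu_apply_odd ε (rfl : 2 * n + 1 = 2 * n + 1)] at this
    rw [shift_iter]
    exact this

lemma extractB {ε : ℕ → ℕ} (hseq : isSeq ε) (hG : Gamma (mu ε)) (k : ℕ) (hk : ε k = 1) :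
    lexLe (mirror ε) (shift^[k + 1] ε) := by
  have hlow := (hG.2 (2 * k + 2)).1
  rcases hlow with ⟨t, pp, qq⟩ | heq
  · simp only [shift_iter, mirror] at pp qq
    rcases three_cases t with rfl | ⟨i, rfl⟩ | ⟨i, rfl⟩
    · exfalso
      rw [mu_apply_even ε (show 0 + (2 * k + 2) = 2 * k + 2 from by omega)] at qq
      rw [mu_apply_zero ε rfl] at qq
      omega
    · refine Or.inl ⟨i, ?_, ?_⟩
      · intro j hj
        have := pp (2 * j + 1) (by omega)
        rw [mu_apply_odd ε (show 2 * j + 1 + (2 * k + 2) = 2 * (j + (k + 1)) + 1 from by omega)] at this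
        rw [mu_apply_odd ε (rfl : 2 * j + 1 = 2 * j + 1)] at this
        rw [shift_iter]
        simp [mirror]
        exact this
      · rw [mu_apply_odd ε (show 2 * i + 1 + (2 * k + 2) = 2 * (i + (k + 1)) + 1 from by omega)] at qq
        rw [mu_apply_odd ε (rfl : 2 * i + 1 = 2 * i + 1)] at qq
        rw [shift_iter]
        simp [mirror]
        exact qq
    · exfalso
      have := pp (2 * i + 1) (by omega)
      rw [mu_apply_odd ε (show 2 * i + 1 + (2 * k + 2) = 2 * (i + (k + 1)) + 1 from by omega)] at this
      rw [mu_apply_odd ε (rfl : 2 * i + 1 = 2 * i + 1)] at this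
      rw [mu_apply_even ε (show 2 * i + 2 + (2 * k + 2) = 2 * (i + (k + 1)) + 2 from by omega)] at qq
      rw [mu_apply_even ε (rfl : 2 * i + 2 = 2 * i + 2)] at qq
      have := hseq i
      omega
  · refine Or.inr ?_
    funext n
    have := congrFun heq (2 * n + 1)
    rw [shift_iter] at this
    simp [mirror] at this
    rw [mu_apply_odd ε (show 2 * n + 1 + (2 * k + 2) = 2 * (n + (k + 1)) + 1 from by omega)] at this
    rw [mu_apply_odd ε (rfl : 2 * n + 1 = 2 * n + 1)] at this
    rw [shift_iter]
    simp [mirror]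
    exact this

lemma key_induction {ε : ℕ → ℕ} (hseq : isSeq ε) (hε0 : ε 0 = 1)
    (A : ∀ k, ε k = 0 → lexLe (shift^[k + 1] ε) ε)
    (B : ∀ k, ε k = 1 → lexLe (mirror ε) (shift^[k + 1] ε)) :
    ∀ k x, (x = ε ∨ x = mirror ε) → ¬ lexLt ε (shift^[k] x) := by
  intro k
  induction k with
  | zero =>
    rintro x (rfl | rfl) hlt
    · obtain ⟨t, p, q⟩ := hlt
      rw [shift_iter] at q
      simp at q
    · obtain ⟨t, p, q⟩ := hlt
      rcases Nat.eq_zero_or_pos t with rfl | ht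
      · rw [shift_iter] at q
        simp [mirror] at q
        omega
      · have := p 0 ht
        rw [shift_iter] at this
        simp [mirror] at this
        omega
  | succ k ih =>
    rintro x hx hlt
    have hxseq : isSeq x := by
      rcases hx with rfl | rfl
      · exact hseq
      · exact isSeq_mirror ε
    obtain ⟨m, p, q⟩ := hlt
    simp only [shift_iter] at p q
    have hm1 : 1 ≤ m := by
      by_contra hc
      have : m = 0 := by omega
      subst this
      have := hxseq (0 + (k + 1))
      omega
    have hxm : x (m + (k + 1)) ≤ 1 := hxseq _
    have hεm : ε m = 0 := by omega
    have hxk : x k ≤ 1 := hxseq k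
    by_cases hx0 : x k = 0
    · have hle : lexLe (shift^[k + 1] x) ε := by
        rcases hx with rfl | rfl
        · exact A k hx0
        · have hεk : ε k = 1 := by
            simp [mirror] at hx0
            have := hseq k
            omega
          have := lexLe_mirror (isSeq_shift hseq (k + 1)) (B k hεk)
          rwa [mirror_mirror hseq, ← shift_mirror] at this
      refine lexLe_lexLt_absurd hle ⟨m, ?_, ?_⟩ <;> simp only [shift_iter]
      · exact p
      · exact q
    · have hx1 : x k = 1 := by omega
      have hfind : ∃ j, ε j = 0 := ⟨m, hεm⟩
      have hs0 : ε (Nat.find hfind) = 0 := Nat.find_spec hfind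
      have hsmin : ∀ j, j < Nat.find hfind → ε j = 1 := by
        intro j hj
        have := Nat.find_min hfind hj
        have := hseq j
        omega
      have hsle : Nat.find hfind ≤ m := Nat.find_min' hfind hεm
      have hs1 : 1 ≤ Nat.find hfind := by
        rcases Nat.eq_zero_or_pos (Nat.find hfind) with h | h
        · rw [h] at hs0; omega
        · exact h
      refine ih x hx ⟨Nat.find hfind, ?_, ?_⟩ <;> simp only [shift_iter]
      · intro j hj
        rcases Nat.eq_zero_or_pos j with rfl | hjpos
        · have : (0 : ℕ) + k = k := by omega
          rw [this, hx1, hε0]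
        · have hj1 : j - 1 < m := by omega
          have := p (j - 1) hj1
          have hidx : j - 1 + (k + 1) = j + k := by omega
          rw [hidx] at this
          rw [← this]
          have h1 : ε (j - 1) = 1 := hsmin (j - 1) (by omega)
          have h2 : ε j = 1 := hsmin j hj
          omega
      · have hidx : Nat.find hfind - 1 + (k + 1) = Nat.find hfind + k := by omega
        have := p (Nat.find hfind - 1) (by omega)
        rw [hidx] at this
        rw [← this]
        have h1 : ε (Nat.find hfind - 1) = 1 := hsmin _ (by omega)
        omega

lemma converse_gamma {ε : ℕ → ℕ} (hseq : isSeq ε) (hε0 : ε 0 = 1) (hG : Gamma (mu ε)) :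
    Gamma ε := by
  have hcase : ∀ k : ℕ, ε k = 0 ∨ ε k = 1 := fun k => by have := hseq k; omega
  have A : ∀ k, ε k = 0 → lexLe (shift^[k + 1] ε) ε := fun k hk => extractA hG k hk
  have B : ∀ k, ε k = 1 → lexLe (mirror ε) (shift^[k + 1] ε) := fun k hk => extractB hseq hG k hk
  have S := key_induction hseq hε0 A B
  refine ⟨hseq, fun k => ⟨?_, ?_⟩⟩
  · rcases lex_total (mirror ε) (shift^[k] ε) with h | h
    · exact h
    · exfalso
      have h2 := lexLt_mirror (isSeq_mirror ε) h
      rw [mirror_mirror hseq, ← shift_mirror] at h2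
      exact S k (mirror ε) (Or.inr rfl) h2
  · rcases lex_total (shift^[k] ε) ε with h | h
    · exact h
    · exact absurd h (S k ε (Or.inl rfl))

/-- ε ∈ Γ iff ε_1 = 1 and μ(ε) ∈ Γ. -/
theorem stmt12 (ε : ℕ → ℕ) (hseq : isSeq ε) :
    Gamma ε ↔ (ε 0 = 1 ∧ Gamma (mu ε)) := by
  constructor
  · intro hG
    have hε0 := eps0_eq_one hseq hG
    exact ⟨hε0, forward_gamma hseq hε0 hG⟩
  · rintro ⟨hε0, hGmu⟩
    exact converse_gamma hseq hε0 hGmu
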